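/- Let A, B be computable well-orderings of ℕ and f a computable reduction from E_min(A) to E_min(B) that is well-defined on c.e. sets. If the A-least element of W_e has A-rank γ, then W_{f(e)} is nonempty and its B-least element has B-rank at least γ. -/

import Mathlib

/-!
Both parts rest on Kleene's recursion theorem, which lets an index `v` enumerate `W_v` while
watching `W_{f v}`. If `W_{f e}` were empty, take `W_v = {m}` once `W_{f v}` becomes nonempty and
`W_v = ∅` otherwise: either way `hred` is violated.

The rank bound goes by induction on `m`. Let `mb` be the `B`-least element of `W_{f e}` and
`a <_A m`. Let `W_v` be the cone `{x | ¬ x <_A a}` if `mb` appears in `W_{f v}`, and the cone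
`{x | ¬ x <_A m}` otherwise. In the second case `W_v` and `W_e` have the same least element, so
`mb` would be the least element of `W_{f v}`; hence the first case holds. The `B`-least element
`b` of `W_{f v}` then has rank at least `rank a` by induction, `b ≤_B mb` as `mb ∈ W_{f v}`, and
`b ≠ mb` since otherwise `W_v` and `W_e` would share their `A`-least element.
-/

/-- The `e`-th computably enumerable set of natural numbers: the domain of the
`e`-th partial computable function. -/
def Wce (e : ℕ) : Set ℕ :=
  {x | ((Denumerable.ofNat Nat.Partrec.Code e).eval x).Dom}


/-- A computable well-ordering of ℕ: a computable (Bool-valued) binary relation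
whose associated strict relation is a well-order on ℕ. -/
structure CompWO where
  r : ℕ → ℕ → Bool
  comp : Computable₂ r
  wo : IsWellOrder ℕ (fun a b => r a b = true)

/-- `m` is the `A`-least element of `S`. -/
def IsMinOf (A : CompWO) (S : Set ℕ) (m : ℕ) : Prop :=
  m ∈ S ∧ ∀ x ∈ S, A.r x m = false

/-- The equivalence relation `E_min(A)` on indices of c.e. sets: `W_e` and `W_i`
have the same `A`-least element, or are both empty. -/
def Emin (A : CompWO) (e i : ℕ) : Prop :=
  (Wce e = ∅ ∧ Wce i = ∅) ∨ ∃ m, IsMinOf A (Wce e) m ∧ IsMinOf A (Wce i) m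

/-- Computable reducibility of binary relations on ℕ. -/
def CompReducible (E F : ℕ → ℕ → Prop) : Prop :=
  ∃ h : ℕ → ℕ, Computable h ∧ ∀ x y, E x y ↔ F (h x) (h y)

/-- The order type of a computable well-ordering. -/
noncomputable def CompWO.otype (A : CompWO) : Ordinal :=
  @Ordinal.type ℕ (fun a b => A.r a b = true) A.wo

/-- The `A`-rank of an element: the order type of its set of predecessors. -/
noncomputable def CompWO.rank (A : CompWO) (a : ℕ) : Ordinal :=
  @Ordinal.typein ℕ (fun a b => A.r a b = true) A.wo a

namespace Wce

open Nat.Partrec Code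

def memStage (e x n : ℕ) : Bool := (evaln n (Denumerable.ofNat Code e) x).isSome

theorem mem_iff_exists_memStage {e x : ℕ} : x ∈ Wce e ↔ ∃ n, memStage e x n = true := by
  simp only [Wce, memStage, Set.mem_ofPred_eq, Part.dom_iff_mem, evaln_complete,
    Option.isSome_iff_exists]
  exact exists_comm

theorem nonempty_iff_exists_memStage {e : ℕ} :
    (Wce e).Nonempty ↔ ∃ n : ℕ, memStage e n.unpair.1 n.unpair.2 = true := by
  simp only [Set.Nonempty, mem_iff_exists_memStage]
  exact ⟨fun ⟨x, n, h⟩ => ⟨Nat.pair x n, by simpa using h⟩,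
    fun ⟨n, h⟩ => ⟨_, _, h⟩⟩

theorem computable_memStage : Computable₂ fun (e : ℕ) (t : ℕ × ℕ) => memStage e t.1 t.2 :=
  (Primrec.option_isSome.comp <| primrec_evaln.comp <|
    ((Primrec.snd.comp Primrec.snd).pair ((Primrec.ofNat Code).comp Primrec.fst)).pair
      (Primrec.fst.comp Primrec.snd)).to_comp

theorem exists_fixed_point_dom {F : ℕ → ℕ →. ℕ} (hF : Partrec₂ F) :
    ∃ v, Wce v = {x | (F v x).Dom} := by
  obtain ⟨c, hc⟩ :=
    fixed_point₂ (hF.comp (Computable.encode.comp Computable.fst) Computable.snd).to₂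
  exact ⟨Encodable.encode c, by simp only [Wce, Denumerable.ofNat_encode, hc]⟩

theorem exists_fixed_point_exists {p : ℕ → ℕ × ℕ → Bool} (hp : Computable₂ p) :
    ∃ v, Wce v = {x | ∃ n, p v (x, n) = true} := by
  have hF : Partrec₂ fun v x => Nat.rfind fun n => Part.some (p v (x, n)) :=
    Partrec.rfind (hp.comp (Computable.fst.comp Computable.fst)
      (Computable.snd.comp Computable.fst |>.pair Computable.snd)).partrec
  obtain ⟨v, hv⟩ := exists_fixed_point_dom hF
  exact ⟨v, hv.trans (Set.ext fun x => Nat.rfind_dom.trans (by simp))⟩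

end Wce

attribute [local instance] CompWO.wo

namespace CompWO

variable (A : CompWO)

theorem r_self (a : ℕ) : A.r a a = false :=
  Bool.eq_false_iff.2 (irrefl_of (fun a b => A.r a b = true) a)

theorem r_eq_false_of_r {a b : ℕ} (h : A.r a b = true) : A.r b a = false :=
  Bool.eq_false_iff.2 (asymm_of (fun a b => A.r a b = true) h)

theorem eq_of_r_eq_false {a b : ℕ} (hab : A.r a b = false) (hba : A.r b a = false) : a = b := by
  rcases trichotomous_of (fun a b => A.r a b = true) a b with h | h | h <;> simp_all

theorem r_of_r_eq_false_of_ne {a b : ℕ} (hba : A.r b a = false) (hne : a ≠ b) :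
    A.r a b = true :=
  Bool.not_eq_false _ |>.mp fun hab => hne (A.eq_of_r_eq_false hab hba)

theorem exists_isMinOf {S : Set ℕ} (hS : S.Nonempty) : ∃ m, IsMinOf A S m := by
  obtain ⟨m, hm, hmin⟩ := (IsWellFounded.wf (r := fun a b => A.r a b = true)).has_min S hS
  exact ⟨m, hm, fun x hx => Bool.eq_false_iff.2 (hmin x hx)⟩

theorem rank_lt_rank {a b : ℕ} (h : A.r a b = true) : A.rank a < A.rank b :=
  (Ordinal.typein_lt_typein (fun a b => A.r a b = true)).2 h

theorem rank_le_of_forall_lt {m : ℕ} {o : Ordinal} (h : ∀ a, A.r a m = true → A.rank a < o) :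
    A.rank m ≤ o := by
  refine le_of_forall_lt fun δ hδ => ?_
  obtain ⟨a, rfl⟩ := Ordinal.typein_surj (fun a b => A.r a b = true)
    (hδ.trans (Ordinal.typein_lt_type _ m))
  exact h a ((Ordinal.typein_lt_typein (fun a b => A.r a b = true)).1 hδ)

end CompWO

theorem IsMinOf.unique {A : CompWO} {S : Set ℕ} {m₁ m₂ : ℕ} (h₁ : IsMinOf A S m₁)
    (h₂ : IsMinOf A S m₂) : m₁ = m₂ :=
  A.eq_of_r_eq_false (h₂.2 m₁ h₁.1) (h₁.2 m₂ h₂.1)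

namespace Emin

variable {A : CompWO} {e i : ℕ}

theorem nonempty_iff (h : Emin A e i) : (Wce e).Nonempty ↔ (Wce i).Nonempty := by
  rcases h with ⟨he, hi⟩ | ⟨m, he, hi⟩
  · simp [he, hi]
  · exact iff_of_true ⟨m, he.1⟩ ⟨m, hi.1⟩

theorem isMinOf_iff (h : Emin A e i) {m : ℕ} : IsMinOf A (Wce e) m ↔ IsMinOf A (Wce i) m := by
  rcases h with ⟨he, hi⟩ | ⟨m', he, hi⟩
  · simp [IsMinOf, he, hi]
  · exact ⟨fun h => he.unique h ▸ hi, fun h => hi.unique h ▸ he⟩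

end Emin

section Reduction

open Wce

variable {A B : CompWO} {f : ℕ → ℕ}

theorem wce_nonempty_of_reduction (hf : Computable f)
    (hred : ∀ x y, Emin A x y ↔ Emin B (f x) (f y)) {e m : ℕ} (hm : IsMinOf A (Wce e) m) :
    (Wce (f e)).Nonempty := by
  obtain ⟨v, hv⟩ := exists_fixed_point_exists
    (p := fun v t => (t.1 == m) && memStage (f v) t.2.unpair.1 t.2.unpair.2)
    (Primrec.and.to_comp.comp
      (Primrec.beq.to_comp.comp (Computable.fst.comp Computable.snd) (Computable.const m))
      (computable_memStage.comp (hf.comp Computable.fst)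
        (Computable.unpair.comp (Computable.snd.comp Computable.snd)))).to₂
  have hWv : Wce v = {x | x = m ∧ (Wce (f v)).Nonempty} := by
    rw [hv, nonempty_iff_exists_memStage]
    ext x
    simp
  by_cases hfv : (Wce (f v)).Nonempty
  · have hvm : IsMinOf A (Wce v) m := by
      rw [hWv]
      exact ⟨⟨rfl, hfv⟩, fun x hx => hx.1 ▸ A.r_self x⟩
    exact ((hred v e).1 (Or.inr ⟨m, hvm, hm⟩)).nonempty_iff.1 hfv
  · by_contra hfe
    have hB : Emin B (f v) (f e) :=
      Or.inl ⟨Set.not_nonempty_iff_eq_empty.1 hfv, Set.not_nonempty_iff_eq_empty.1 hfe⟩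
    obtain ⟨x, hx⟩ := ((hred v e).2 hB).nonempty_iff.2 ⟨m, hm.1⟩
    exact hfv (hWv ▸ hx).2

theorem rank_lt_rank_of_reduction (hf : Computable f)
    (hred : ∀ x y, Emin A x y ↔ Emin B (f x) (f y)) {e m mb a : ℕ} (hm : IsMinOf A (Wce e) m)
    (hmb : IsMinOf B (Wce (f e)) mb) (ham : A.r a m = true)
    (ih : ∀ i, IsMinOf A (Wce i) a → ∃ b, IsMinOf B (Wce (f i)) b ∧ A.rank a ≤ B.rank b) :
    A.rank a < B.rank mb := by
  obtain ⟨v, hv⟩ := exists_fixed_point_exists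
    (p := fun v t => !A.r t.1 a && (!A.r t.1 m || memStage (f v) mb t.2))
    (Primrec.and.to_comp.comp
      (Primrec.not.to_comp.comp (A.comp.comp (Computable.fst.comp Computable.snd)
        (Computable.const a)))
      (Primrec.or.to_comp.comp
        (Primrec.not.to_comp.comp (A.comp.comp (Computable.fst.comp Computable.snd)
          (Computable.const m)))
        (computable_memStage.comp (hf.comp Computable.fst)
          ((Computable.const mb).pair (Computable.snd.comp Computable.snd))))).to₂
  have hWv : Wce v = {x | A.r x a = false ∧ (A.r x m = false ∨ mb ∈ Wce (f v))} := by
    rw [hv]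
    ext x
    simp [mem_iff_exists_memStage, exists_or]
  have hmb_mem : mb ∈ Wce (f v) := by
    by_contra hmb_not
    have hvm : IsMinOf A (Wce v) m := by
      rw [hWv]
      refine ⟨⟨A.r_eq_false_of_r ham, Or.inl (A.r_self m)⟩, fun x hx => ?_⟩
      exact hx.2.resolve_right hmb_not
    exact hmb_not (((hred v e).1 (Or.inr ⟨m, hvm, hm⟩)).isMinOf_iff.2 hmb).1
  have hva : IsMinOf A (Wce v) a := by
    rw [hWv]
    exact ⟨⟨A.r_self a, Or.inr hmb_mem⟩, fun x hx => hx.1⟩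
  obtain ⟨b, hb, hab⟩ := ih v hva
  have hb_ne : b ≠ mb := by
    rintro rfl
    have hem := ((hred v e).2 (Or.inr ⟨b, hb, hmb⟩)).isMinOf_iff.1 hva
    rw [hem.unique hm, A.r_self] at ham
    exact Bool.false_ne_true ham
  calc A.rank a ≤ B.rank b := hab
    _ < B.rank mb := B.rank_lt_rank (B.r_of_r_eq_false_of_ne (hb.2 mb hmb_mem) hb_ne)

end Reduction

theorem stmt6_general (A B : CompWO) (f : ℕ → ℕ) (hf : Computable f)
    (hred : ∀ x y, Emin A x y ↔ Emin B (f x) (f y))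
    (e m : ℕ) (hm : IsMinOf A (Wce e) m) :
    ∃ mb, IsMinOf B (Wce (f e)) mb ∧ A.rank m ≤ B.rank mb := by
  induction m using A.wo.wf.induction generalizing e with
  | _ m ih =>
  obtain ⟨mb, hmb⟩ := B.exists_isMinOf (wce_nonempty_of_reduction hf hred hm)
  exact ⟨mb, hmb, A.rank_le_of_forall_lt fun a ham =>
    rank_lt_rank_of_reduction hf hred hm hmb ham (ih a ham)⟩

/-- A computable reduction from E_min(A) to E_min(B) that is well-defined on c.e. sets
does not decrease the rank of the least element: if the A-least element of W_e has
A-rank γ, then W_{f(e)} has a B-least element of B-rank at least γ. -/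
theorem stmt6 (A B : CompWO) (f : ℕ → ℕ) (hf : Computable f)
    (hred : ∀ x y, Emin A x y ↔ Emin B (f x) (f y))
    (hwd : ∀ e i, Wce e = Wce i → Wce (f e) = Wce (f i))
    (e m : ℕ) (hm : IsMinOf A (Wce e) m) :
    ∃ mb, IsMinOf B (Wce (f e)) mb ∧ A.rank m ≤ B.rank mb :=
  stmt6_general A B f hf hred e m hm
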